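/- arXiv:1512.01215 — 2 statements merged into one kernel-verified Lean document; each statement's English description precedes it below -/
import Mathlib

section
/- Let A ∈ ℝ^{d1×d2×d3} and let P_k be an orthogonal projection matrix on ℝ^{d_k} for k = 1,2,3, with P_k^⊥ = I − P_k. For matrices B_k acting on each mode, let (B1⊗B2⊗B3)A denote the multilinear action ((B1⊗B2⊗B3)A)_{i1 i2 i3} = Σ_{j1,j2,j3} (B1)_{i1 j1}(B2)_{i2 j2}(B3)_{i3 j3} A_{j1 j2 j3}. Define Q = P1⊗P2⊗P3 + P1^⊥⊗P2⊗P3 + P1⊗P2^⊥⊗P3 + P1⊗P2⊗P3^⊥ and Q^⊥ = P1^⊥⊗P2^⊥⊗P3^⊥ + P1^⊥⊗P2^⊥⊗P3 + P1⊗P2^⊥⊗P3^⊥ + P1^⊥⊗P2⊗P3^⊥. Then ‖A‖_* ≥ ‖(P1⊗P2⊗P3)A‖_* + (1/2)‖Q^⊥ A‖_*. -/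
noncomputable section

/-- Inner product of two order-3 tensors. -/
def tip {d1 d2 d3 : ℕ} (A B : Fin d1 → Fin d2 → Fin d3 → ℝ) : ℝ :=
  ∑ j1, ∑ j2, ∑ j3, A j1 j2 j3 * B j1 j2 j3

/-- Tensor spectral norm. -/
def specNorm {d1 d2 d3 : ℕ} (A : Fin d1 → Fin d2 → Fin d3 → ℝ) : ℝ :=
  sSup {x | ∃ (u : Fin d1 → ℝ) (v : Fin d2 → ℝ) (w : Fin d3 → ℝ),
    (∑ i, u i ^ 2) ≤ 1 ∧ (∑ i, v i ^ 2) ≤ 1 ∧ (∑ i, w i ^ 2) ≤ 1 ∧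
    x = tip A (fun j1 j2 j3 => u j1 * v j2 * w j3)}

/-- Tensor nuclear norm, the dual norm of the spectral norm. -/
def nucNorm {d1 d2 d3 : ℕ} (A : Fin d1 → Fin d2 → Fin d3 → ℝ) : ℝ :=
  sSup {x | ∃ B : Fin d1 → Fin d2 → Fin d3 → ℝ, specNorm B ≤ 1 ∧ x = tip A B}

/-- Multilinear action of a triple of matrices on an order-3 tensor. -/
def act {d1 d2 d3 : ℕ} (B1 : Matrix (Fin d1) (Fin d1) ℝ) (B2 : Matrix (Fin d2) (Fin d2) ℝ)
    (B3 : Matrix (Fin d3) (Fin d3) ℝ) (A : Fin d1 → Fin d2 → Fin d3 → ℝ) :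
    Fin d1 → Fin d2 → Fin d3 → ℝ :=
  fun i1 i2 i3 => ∑ j1, ∑ j2, ∑ j3, B1 i1 j1 * B2 i2 j2 * B3 i3 j3 * A j1 j2 j3

/-!
By duality it suffices, given `B1` and `B2` of spectral norm at most one, to show that
`D = (P1 ⊗ P2 ⊗ P3) B1 + ½ Q^⊥ B2` has spectral norm at most one: since all the projections are
self-adjoint, `⟨A, D⟩ = ⟨(P1 ⊗ P2 ⊗ P3) A, B1⟩ + ½ ⟨Q^⊥ A, B2⟩`. On a rank-one tensor `u ⊗ v ⊗ w`,
the first two terms of `Q^⊥` merge because `P3^⊥ + P3 = 1`, so `Q^⊥ (u ⊗ v ⊗ w)` is a sum of three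
rank-one tensors. Writing `a = ‖P1 u‖`, `a' = ‖P1^⊥ u‖` and so on, Pythagoras gives
`a² + a'² ≤ 1` and likewise for `b, b'` and `c, c'`, and then
`⟨D, u ⊗ v ⊗ w⟩ ≤ abc + ½ (a'b' + ab'c' + a'bc') ≤ 1` by Cauchy–Schwarz.
-/

open Matrix Finset

section Pinching

variable {d d1 d2 d3 : ℕ}

def rankOne (u : Fin d1 → ℝ) (v : Fin d2 → ℝ) (w : Fin d3 → ℝ) : Fin d1 → Fin d2 → Fin d3 → ℝ :=
  fun j1 j2 j3 => u j1 * v j2 * w j3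

/-- The tensor `Q^⊥ A`. -/
def actQPerp (P1 : Matrix (Fin d1) (Fin d1) ℝ) (P2 : Matrix (Fin d2) (Fin d2) ℝ)
    (P3 : Matrix (Fin d3) (Fin d3) ℝ) (A : Fin d1 → Fin d2 → Fin d3 → ℝ) :
    Fin d1 → Fin d2 → Fin d3 → ℝ :=
  act (1 - P1) (1 - P2) (1 - P3) A + act (1 - P1) (1 - P2) P3 A +
    act P1 (1 - P2) (1 - P3) A + act (1 - P1) P2 (1 - P3) A

lemma tip_comm (A B : Fin d1 → Fin d2 → Fin d3 → ℝ) : tip A B = tip B A := by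
  simp only [tip, mul_comm]

lemma tip_add_left (X Y A : Fin d1 → Fin d2 → Fin d3 → ℝ) :
    tip (X + Y) A = tip X A + tip Y A := by
  simp only [tip, Pi.add_apply, add_mul, sum_add_distrib]

lemma tip_add_right (A X Y : Fin d1 → Fin d2 → Fin d3 → ℝ) :
    tip A (X + Y) = tip A X + tip A Y := by
  rw [tip_comm, tip_add_left, tip_comm X, tip_comm Y]

lemma tip_smul_left (t : ℝ) (X A : Fin d1 → Fin d2 → Fin d3 → ℝ) :
    tip (t • X) A = t * tip X A := by
  simp only [tip, Pi.smul_apply, smul_eq_mul, mul_sum, mul_assoc]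

lemma tip_smul_right (t : ℝ) (A X : Fin d1 → Fin d2 → Fin d3 → ℝ) :
    tip A (t • X) = t * tip A X := by
  rw [tip_comm, tip_smul_left, tip_comm]

lemma rankOne_add_right (x : Fin d1 → ℝ) (y : Fin d2 → ℝ) (z z' : Fin d3 → ℝ) :
    rankOne x y (z + z') = rankOne x y z + rankOne x y z' := by
  ext
  simp only [rankOne, Pi.add_apply, mul_add]

lemma rankOne_smul (s t r : ℝ) (x : Fin d1 → ℝ) (y : Fin d2 → ℝ) (z : Fin d3 → ℝ) :
    rankOne (s • x) (t • y) (r • z) = (s * t * r) • rankOne x y z := by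
  ext
  simp only [rankOne, Pi.smul_apply, smul_eq_mul]
  ring

lemma tip_act (M1 : Matrix (Fin d1) (Fin d1) ℝ) (M2 : Matrix (Fin d2) (Fin d2) ℝ)
    (M3 : Matrix (Fin d3) (Fin d3) ℝ) (X Y : Fin d1 → Fin d2 → Fin d3 → ℝ) :
    tip (act M1 M2 M3 X) Y = tip X (act M1ᵀ M2ᵀ M3ᵀ Y) := by
  have hprod : ∀ F : Fin d1 → Fin d2 → Fin d3 → ℝ,
      ∑ i1, ∑ i2, ∑ i3, F i1 i2 i3 = ∑ p : Fin d1 × Fin d2 × Fin d3, F p.1 p.2.1 p.2.2 :=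
    fun F => by simp only [Fintype.sum_prod_type]
  simp only [tip, act, transpose_apply, sum_mul, mul_sum, hprod]
  rw [sum_comm]
  exact sum_congr rfl fun _ _ => sum_congr rfl fun _ _ => by ring

lemma tip_act_of_isSymm {M1 : Matrix (Fin d1) (Fin d1) ℝ} {M2 : Matrix (Fin d2) (Fin d2) ℝ}
    {M3 : Matrix (Fin d3) (Fin d3) ℝ} (h1 : M1.IsSymm) (h2 : M2.IsSymm) (h3 : M3.IsSymm)
    (X Y : Fin d1 → Fin d2 → Fin d3 → ℝ) :
    tip (act M1 M2 M3 X) Y = tip X (act M1 M2 M3 Y) := by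
  rw [tip_act, h1.eq, h2.eq, h3.eq]

lemma tip_actQPerp {P1 : Matrix (Fin d1) (Fin d1) ℝ} {P2 : Matrix (Fin d2) (Fin d2) ℝ}
    {P3 : Matrix (Fin d3) (Fin d3) ℝ} (h1 : P1.IsSymm) (h2 : P2.IsSymm) (h3 : P3.IsSymm)
    (X Y : Fin d1 → Fin d2 → Fin d3 → ℝ) :
    tip (actQPerp P1 P2 P3 X) Y = tip X (actQPerp P1 P2 P3 Y) := by
  have h1' := isSymm_one.sub h1
  have h2' := isSymm_one.sub h2
  have h3' := isSymm_one.sub h3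
  simp only [actQPerp, tip_add_left, tip_add_right, tip_act_of_isSymm, *]

lemma act_rankOne (M1 : Matrix (Fin d1) (Fin d1) ℝ) (M2 : Matrix (Fin d2) (Fin d2) ℝ)
    (M3 : Matrix (Fin d3) (Fin d3) ℝ) (x : Fin d1 → ℝ) (y : Fin d2 → ℝ) (z : Fin d3 → ℝ) :
    act M1 M2 M3 (rankOne x y z) = rankOne (M1 *ᵥ x) (M2 *ᵥ y) (M3 *ᵥ z) := by
  ext
  simp only [act, rankOne, mulVec, dotProduct]
  rw [sum_mul_sum]
  simp only [sum_mul]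
  simp only [mul_sum]
  exact sum_congr rfl fun _ _ => sum_congr rfl fun _ _ => sum_congr rfl fun _ _ => by ring

lemma one_sub_mulVec_add_mulVec (P : Matrix (Fin d) (Fin d) ℝ) (x : Fin d → ℝ) :
    (1 - P) *ᵥ x + P *ᵥ x = x := by
  rw [sub_mulVec, one_mulVec, sub_add_cancel]

lemma actQPerp_rankOne (P1 : Matrix (Fin d1) (Fin d1) ℝ) (P2 : Matrix (Fin d2) (Fin d2) ℝ)
    (P3 : Matrix (Fin d3) (Fin d3) ℝ) (u : Fin d1 → ℝ) (v : Fin d2 → ℝ) (w : Fin d3 → ℝ) :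
    actQPerp P1 P2 P3 (rankOne u v w) =
      rankOne ((1 - P1) *ᵥ u) ((1 - P2) *ᵥ v) w +
        rankOne (P1 *ᵥ u) ((1 - P2) *ᵥ v) ((1 - P3) *ᵥ w) +
        rankOne ((1 - P1) *ᵥ u) (P2 *ᵥ v) ((1 - P3) *ᵥ w) := by
  rw [actQPerp, act_rankOne, act_rankOne, act_rankOne, act_rankOne, ← rankOne_add_right,
    one_sub_mulVec_add_mulVec]

lemma exists_eq_sqrt_smul (x : Fin d → ℝ) :
    ∃ u : Fin d → ℝ, ∑ i, u i ^ 2 ≤ 1 ∧ x = √(∑ i, x i ^ 2) • u := by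
  have hs : 0 ≤ ∑ i, x i ^ 2 := by positivity
  rcases eq_or_ne √(∑ i, x i ^ 2) 0 with h | h
  · refine ⟨0, by simp, ?_⟩
    have hx : ∑ i, x i ^ 2 = 0 := le_antisymm (Real.sqrt_eq_zero'.1 h) hs
    ext i
    simpa using (sum_eq_zero_iff_of_nonneg fun i _ => sq_nonneg (x i)).1 hx i (mem_univ i)
  · refine ⟨(√(∑ i, x i ^ 2))⁻¹ • x, le_of_eq ?_, (smul_inv_smul₀ h x).symm⟩
    simp only [Pi.smul_apply, smul_eq_mul, mul_pow, ← mul_sum, inv_pow, Real.sq_sqrt hs]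
    exact inv_mul_cancel₀ (by simpa [Real.sqrt_eq_zero hs] using h)

lemma abs_le_one_of_sum_sq_le_one {x : Fin d → ℝ} (hx : ∑ i, x i ^ 2 ≤ 1) (i : Fin d) :
    |x i| ≤ 1 :=
  sq_le_one_iff_abs_le_one _ |>.1 <|
    (single_le_sum (fun j _ => sq_nonneg (x j)) (mem_univ i)).trans hx

lemma tip_rankOne_le_sum_abs (B : Fin d1 → Fin d2 → Fin d3 → ℝ) {u : Fin d1 → ℝ}
    {v : Fin d2 → ℝ} {w : Fin d3 → ℝ} (hu : ∑ i, u i ^ 2 ≤ 1) (hv : ∑ i, v i ^ 2 ≤ 1)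
    (hw : ∑ i, w i ^ 2 ≤ 1) :
    tip B (rankOne u v w) ≤ ∑ p, ∑ q, ∑ r, |B p q r| := by
  refine sum_le_sum fun p _ => sum_le_sum fun q _ => sum_le_sum fun r _ => ?_
  have huvw : |u p * v q * w r| ≤ 1 := by
    rw [abs_mul, abs_mul]
    exact mul_le_one₀ (mul_le_one₀ (abs_le_one_of_sum_sq_le_one hu p) (abs_nonneg _)
      (abs_le_one_of_sum_sq_le_one hv q)) (abs_nonneg _) (abs_le_one_of_sum_sq_le_one hw r)
  calc B p q r * (u p * v q * w r) ≤ |B p q r| * |u p * v q * w r| := by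
        rw [← abs_mul]; exact le_abs_self _
    _ ≤ |B p q r| := mul_le_of_le_one_right (abs_nonneg _) huvw

lemma tip_rankOne_le_specNorm (B : Fin d1 → Fin d2 → Fin d3 → ℝ) {u : Fin d1 → ℝ}
    {v : Fin d2 → ℝ} {w : Fin d3 → ℝ} (hu : ∑ i, u i ^ 2 ≤ 1) (hv : ∑ i, v i ^ 2 ≤ 1)
    (hw : ∑ i, w i ^ 2 ≤ 1) :
    tip B (rankOne u v w) ≤ specNorm B :=
  le_csSup ⟨_, fun _ ⟨_, _, _, hu, hv, hw, hx⟩ => hx ▸ tip_rankOne_le_sum_abs B hu hv hw⟩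
    ⟨u, v, w, hu, hv, hw, rfl⟩

lemma specNorm_le {B : Fin d1 → Fin d2 → Fin d3 → ℝ} {c : ℝ}
    (h : ∀ u v w, ∑ i, u i ^ 2 ≤ 1 → ∑ i, v i ^ 2 ≤ 1 → ∑ i, w i ^ 2 ≤ 1 →
      tip B (rankOne u v w) ≤ c) :
    specNorm B ≤ c :=
  csSup_le ⟨_, 0, 0, 0, by simp, by simp, by simp, rfl⟩
    fun _ ⟨u, v, w, hu, hv, hw, hx⟩ => hx ▸ h u v w hu hv hw

lemma tip_rankOne_le_of_specNorm_le_one {B : Fin d1 → Fin d2 → Fin d3 → ℝ}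
    (hB : specNorm B ≤ 1) (x : Fin d1 → ℝ) (y : Fin d2 → ℝ) (z : Fin d3 → ℝ) :
    tip B (rankOne x y z) ≤ √(∑ i, x i ^ 2) * √(∑ i, y i ^ 2) * √(∑ i, z i ^ 2) := by
  obtain ⟨u, hu, hx⟩ := exists_eq_sqrt_smul x
  obtain ⟨v, hv, hy⟩ := exists_eq_sqrt_smul y
  obtain ⟨w, hw, hz⟩ := exists_eq_sqrt_smul z
  have hxyz : rankOne x y z =
      (√(∑ i, x i ^ 2) * √(∑ i, y i ^ 2) * √(∑ i, z i ^ 2)) • rankOne u v w := by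
    rw [← rankOne_smul, ← hx, ← hy, ← hz]
  rw [hxyz, tip_smul_right]
  exact mul_le_of_le_one_right (by positivity) ((tip_rankOne_le_specNorm B hu hv hw).trans hB)

lemma abs_apply_le_specNorm (B : Fin d1 → Fin d2 → Fin d3 → ℝ) (p : Fin d1) (q : Fin d2)
    (r : Fin d3) : |B p q r| ≤ specNorm B := by
  have hsingle : ∀ {n} (i : Fin n) (s : ℝ), s ^ 2 = 1 →
      ∑ j, (Pi.single i s : Fin n → ℝ) j ^ 2 ≤ 1 :=
    fun i s hs => by simp [Pi.single_apply, hs]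
  have hpos := tip_rankOne_le_specNorm B (hsingle p 1 (one_pow 2)) (hsingle q 1 (one_pow 2))
    (hsingle r 1 (one_pow 2))
  have hneg := tip_rankOne_le_specNorm B (hsingle p (-1) (by norm_num)) (hsingle q 1 (one_pow 2))
    (hsingle r 1 (one_pow 2))
  simp only [tip, rankOne, Pi.single_apply, mul_ite, mul_one, mul_zero, sum_ite_eq', mem_univ,
    ↓reduceIte, mul_neg] at hpos hneg
  exact abs_le.2 ⟨by linarith, hpos⟩

lemma tip_le_nucNorm (A : Fin d1 → Fin d2 → Fin d3 → ℝ) {B : Fin d1 → Fin d2 → Fin d3 → ℝ}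
    (hB : specNorm B ≤ 1) : tip A B ≤ nucNorm A := by
  refine le_csSup ⟨∑ p, ∑ q, ∑ r, |A p q r|, ?_⟩ ⟨B, hB, rfl⟩
  rintro _ ⟨B', hB', rfl⟩
  refine sum_le_sum fun p _ => sum_le_sum fun q _ => sum_le_sum fun r _ => ?_
  calc A p q r * B' p q r ≤ |A p q r| * |B' p q r| := by
        rw [← abs_mul]; exact le_abs_self _
    _ ≤ |A p q r| :=
        mul_le_of_le_one_right (abs_nonneg _) ((abs_apply_le_specNorm B' p q r).trans hB')

lemma nucNorm_le {A : Fin d1 → Fin d2 → Fin d3 → ℝ} {c : ℝ}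
    (h : ∀ B, specNorm B ≤ 1 → tip A B ≤ c) : nucNorm A ≤ c :=
  csSup_le ⟨_, 0, specNorm_le fun _ _ _ _ _ _ => by simp [tip], rfl⟩
    fun _ ⟨B, hB, hx⟩ => hx ▸ h B hB

lemma sum_sq_mulVec_add_sum_sq_one_sub_mulVec {P : Matrix (Fin d) (Fin d) ℝ} (hP : P * P = P)
    (hPs : P.IsSymm) (x : Fin d → ℝ) :
    ∑ i, (P *ᵥ x) i ^ 2 + ∑ i, ((1 - P) *ᵥ x) i ^ 2 = ∑ i, x i ^ 2 := by
  have hsq : ∀ y : Fin d → ℝ, ∑ i, y i ^ 2 = y ⬝ᵥ y := fun y => by simp only [dotProduct, sq]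
  have horth : (P *ᵥ x) ⬝ᵥ ((1 - P) *ᵥ x) = 0 := by
    rw [dotProduct_mulVec, ← mulVec_transpose, transpose_sub, transpose_one, hPs.eq, mulVec_mulVec,
      sub_mul, one_mul, hP, sub_self, zero_mulVec, zero_dotProduct]
  have hsplit : x = P *ᵥ x + (1 - P) *ᵥ x := by
    rw [add_comm, one_sub_mulVec_add_mulVec]
  conv_rhs => rw [hsq, hsplit]
  rw [hsq, hsq, add_dotProduct, dotProduct_add, dotProduct_add, horth,
    dotProduct_comm ((1 - P) *ᵥ x) (P *ᵥ x), horth]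
  ring

lemma sqrt_sum_sq_mulVec_sq_add_le_one {P : Matrix (Fin d) (Fin d) ℝ} (hP : P * P = P)
    (hPs : P.IsSymm) {x : Fin d → ℝ} (hx : ∑ i, x i ^ 2 ≤ 1) :
    √(∑ i, (P *ᵥ x) i ^ 2) ^ 2 + √(∑ i, ((1 - P) *ᵥ x) i ^ 2) ^ 2 ≤ 1 := by
  rw [Real.sq_sqrt (by positivity), Real.sq_sqrt (by positivity),
    sum_sq_mulVec_add_sum_sq_one_sub_mulVec hP hPs]
  exact hx

lemma add_half_mul_le_one {a a' b b' c c' : ℝ} (ha : 0 ≤ a) (ha' : 0 ≤ a') (hb : 0 ≤ b)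
    (hb' : 0 ≤ b') (hc : 0 ≤ c) (hc' : 0 ≤ c') (haa : a ^ 2 + a' ^ 2 ≤ 1)
    (hbb : b ^ 2 + b' ^ 2 ≤ 1) (hcc : c ^ 2 + c' ^ 2 ≤ 1) :
    a * b * c + 1 / 2 * (a' * b' + a * b' * c' + a' * b * c') ≤ 1 := by
  -- Cauchy–Schwarz in `(c, c')` reduces the claim to `(ab)² + ((ab' + a'b)/2)² ≤ (1 - a'b'/2)²`.
  have hab : a * b + a' * b' ≤ 1 := by
    nlinarith [sq_nonneg (a * b' - a' * b), mul_nonneg ha' hb']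
  have hid : (a * b' + a' * b) ^ 2 + (a * b - a' * b') ^ 2 =
      (a ^ 2 + a' ^ 2) * (b ^ 2 + b' ^ 2) := by
    ring
  have hXY : (a * b) ^ 2 + ((a * b' + a' * b) / 2) ^ 2 ≤ (1 - a' * b' / 2) ^ 2 := by
    nlinarith [mul_le_one₀ haa (by positivity) hbb, mul_nonneg (sub_nonneg.2 hab)
      (by nlinarith [mul_nonneg ha hb, mul_nonneg ha' hb'] : 0 ≤ 3 * (a * b) + 3 - a' * b')]
  have hcs : (c * (a * b) + c' * ((a * b' + a' * b) / 2)) ^ 2 ≤ (1 - a' * b' / 2) ^ 2 := by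
    nlinarith [sq_nonneg (c * ((a * b' + a' * b) / 2) - c' * (a * b)),
      mul_le_mul hcc hXY (by positivity) zero_le_one]
  have hlin : c * (a * b) + c' * ((a * b' + a' * b) / 2) ≤ 1 - a' * b' / 2 :=
    (pow_le_pow_iff_left₀ (by positivity) (by nlinarith) two_ne_zero).1 hcs
  linarith

lemma specNorm_pinch_le_one {P1 : Matrix (Fin d1) (Fin d1) ℝ} {P2 : Matrix (Fin d2) (Fin d2) ℝ}
    {P3 : Matrix (Fin d3) (Fin d3) ℝ} (hP1 : P1 * P1 = P1) (hP2 : P2 * P2 = P2)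
    (hP3 : P3 * P3 = P3) (hP1s : P1.IsSymm) (hP2s : P2.IsSymm) (hP3s : P3.IsSymm)
    {B1 B2 : Fin d1 → Fin d2 → Fin d3 → ℝ} (hB1 : specNorm B1 ≤ 1) (hB2 : specNorm B2 ≤ 1) :
    specNorm (act P1 P2 P3 B1 + (1 / 2 : ℝ) • actQPerp P1 P2 P3 B2) ≤ 1 := by
  refine specNorm_le fun u v w hu hv hw => ?_
  rw [tip_add_left, tip_smul_left, tip_act_of_isSymm hP1s hP2s hP3s, tip_actQPerp hP1s hP2s hP3s,
    act_rankOne, actQPerp_rankOne, tip_add_right, tip_add_right]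
  have hw1 : √(∑ i, w i ^ 2) ≤ 1 := Real.sqrt_le_one.2 hw
  have h0 := tip_rankOne_le_of_specNorm_le_one hB1 (P1 *ᵥ u) (P2 *ᵥ v) (P3 *ᵥ w)
  have h1 := (tip_rankOne_le_of_specNorm_le_one hB2 ((1 - P1) *ᵥ u) ((1 - P2) *ᵥ v) w).trans
    (mul_le_of_le_one_right (by positivity) hw1)
  have h2 := tip_rankOne_le_of_specNorm_le_one hB2 (P1 *ᵥ u) ((1 - P2) *ᵥ v) ((1 - P3) *ᵥ w)
  have h3 := tip_rankOne_le_of_specNorm_le_one hB2 ((1 - P1) *ᵥ u) (P2 *ᵥ v) ((1 - P3) *ᵥ w)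
  have key := add_half_mul_le_one (by positivity) (by positivity) (by positivity) (by positivity)
    (by positivity) (by positivity) (sqrt_sum_sq_mulVec_sq_add_le_one hP1 hP1s hu)
    (sqrt_sum_sq_mulVec_sq_add_le_one hP2 hP2s hv) (sqrt_sum_sq_mulVec_sq_add_le_one hP3 hP3s hw)
  linarith

end Pinching

/-- the pinching inequality for the tensor nuclear norm. -/
theorem stmt0 {d1 d2 d3 : ℕ}
    (P1 : Matrix (Fin d1) (Fin d1) ℝ) (P2 : Matrix (Fin d2) (Fin d2) ℝ)
    (P3 : Matrix (Fin d3) (Fin d3) ℝ)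
    (hP1 : P1 * P1 = P1) (hP2 : P2 * P2 = P2) (hP3 : P3 * P3 = P3)
    (hP1s : P1.IsSymm) (hP2s : P2.IsSymm) (hP3s : P3.IsSymm)
    (A : Fin d1 → Fin d2 → Fin d3 → ℝ) :
    nucNorm A ≥ nucNorm (act P1 P2 P3 A) +
      (1 / 2) * nucNorm
        (act (1 - P1) (1 - P2) (1 - P3) A + act (1 - P1) (1 - P2) P3 A +
          act P1 (1 - P2) (1 - P3) A + act (1 - P1) P2 (1 - P3) A) := by
  have hpair : ∀ B1 B2, specNorm B1 ≤ 1 → specNorm B2 ≤ 1 →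
      tip (act P1 P2 P3 A) B1 + 1 / 2 * tip (actQPerp P1 P2 P3 A) B2 ≤ nucNorm A := by
    intro B1 B2 hB1 hB2
    have h := tip_le_nucNorm A (specNorm_pinch_le_one hP1 hP2 hP3 hP1s hP2s hP3s hB1 hB2)
    rwa [tip_add_right, tip_smul_right, ← tip_act_of_isSymm hP1s hP2s hP3s,
      ← tip_actQPerp hP1s hP2s hP3s] at h
  have hperp : ∀ B1, specNorm B1 ≤ 1 →
      nucNorm (actQPerp P1 P2 P3 A) ≤ 2 * (nucNorm A - tip (act P1 P2 P3 A) B1) :=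
    fun B1 hB1 => nucNorm_le fun B2 hB2 => by linarith [hpair B1 B2 hB1 hB2]
  have h : nucNorm (act P1 P2 P3 A) ≤ nucNorm A - 1 / 2 * nucNorm (actQPerp P1 P2 P3 A) :=
    nucNorm_le fun B1 hB1 => by linarith [hperp B1 hB1]
  rw [actQPerp] at h
  linarith
end
end

section
/- Let G ∈ ℝ^{d1×d2} be a random matrix with i.i.d. standard normal N(0,1) entries. Then E[ sup{ uᵀ G v : u ∈ ℝ^{d1}, v ∈ ℝ^{d2}, ‖u‖_{ℓ2} ≤ 1, ‖v‖_{ℓ1} ≤ 1 } ] ≤ 3(√d1 + √(log d2)). -/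
/-!
For a fixed matrix `A`, the supremum of `uᵀ A v` over `‖u‖₂ ≤ 1`, `‖v‖₁ ≤ 1` is at most the largest
column norm of `A` (Cauchy–Schwarz in `u`, then `ℓ₁`–`ℓ∞` duality in `v`), and for every `t > 0` the
largest squared column norm is at most `t⁻¹ log ∑ⱼ exp (t ‖Aⱼ‖²)`. For the Gaussian matrix, each
squared column norm is a sum of `d1` independent squared standard Gaussians, so with `t = 1/4` its
exponential moment is `(1 - 2t)^(-d1/2) = √2 ^ d1`. Jensen's inequality for `√` and then for `log`
bounds the expectation by `√(4 log (d2 √2 ^ d1)) = √(4 log d2 + 2 d1 log 2)`.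
-/

open MeasureTheory ProbabilityTheory Real

noncomputable section

def l1ToL2Norm {ι κ : Type*} [Fintype ι] [Fintype κ] (A : ι → κ → ℝ) : ℝ :=
  sSup {x | ∃ (u : ι → ℝ) (v : κ → ℝ), √(∑ i, u i ^ 2) ≤ 1 ∧ (∑ j, |v j|) ≤ 1 ∧
    x = ∑ i, ∑ j, u i * A i j * v j}

section Deterministic

variable {ι κ : Type*} [Fintype ι] [Fintype κ]

lemma l1ToL2Norm_nonneg (A : ι → κ → ℝ) : 0 ≤ l1ToL2Norm A :=
  Real.sSup_nonneg' ⟨0, ⟨0, 0, by simp, by simp, by simp⟩, le_rfl⟩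

lemma l1ToL2Norm_le_sqrt {A : ι → κ → ℝ} {c : ℝ} (hA : ∀ j, ∑ i, A i j ^ 2 ≤ c) :
    l1ToL2Norm A ≤ √c := by
  refine csSup_le ⟨0, 0, 0, by simp, by simp, by simp⟩ ?_
  rintro x ⟨u, v, hu, hv, rfl⟩
  have hcol : ∀ j, |∑ i, u i * A i j| ≤ √c := fun j => calc
    |∑ i, u i * A i j| ≤ ∑ i, |u i| * |A i j| := by
      simpa only [abs_mul] using Finset.abs_sum_le_sum_abs (fun i => u i * A i j) Finset.univ
    _ ≤ √(∑ i, u i ^ 2) * √(∑ i, A i j ^ 2) := by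
      simpa only [sq_abs] using sum_mul_le_sqrt_mul_sqrt _ (|u ·|) (|A · j|)
    _ ≤ 1 * √c := mul_le_mul hu (sqrt_le_sqrt (hA j)) (sqrt_nonneg _) zero_le_one
    _ = √c := one_mul _
  calc ∑ i, ∑ j, u i * A i j * v j = ∑ j, (∑ i, u i * A i j) * v j := by
        rw [Finset.sum_comm]; simp only [Finset.sum_mul]
    _ ≤ ∑ j, √c * |v j| := Finset.sum_le_sum fun j _ =>
        (le_abs_self _).trans ((abs_mul _ _).trans_le
          (mul_le_mul_of_nonneg_right (hcol j) (abs_nonneg _)))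
    _ = √c * ∑ j, |v j| := (Finset.mul_sum _ _ _).symm
    _ ≤ √c * 1 := mul_le_mul_of_nonneg_left hv (sqrt_nonneg _)
    _ = √c := mul_one _

lemma le_log_sum_exp (a : κ → ℝ) (j : κ) : a j ≤ log (∑ k, exp (a k)) := by
  rw [le_log_iff_exp_le (Finset.sum_pos (fun k _ => exp_pos _) ⟨j, Finset.mem_univ j⟩)]
  exact Finset.single_le_sum (f := fun k => exp (a k)) (fun k _ => (exp_pos _).le)
    (Finset.mem_univ j)

lemma l1ToL2Norm_le_sqrt_log_sum_exp (A : ι → κ → ℝ) {t : ℝ} (ht : 0 < t) :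
    l1ToL2Norm A ≤ √(log (∑ j, exp (t * ∑ i, A i j ^ 2)) / t) :=
  l1ToL2Norm_le_sqrt fun j => by
    rw [le_div_iff₀ ht, mul_comm]
    exact le_log_sum_exp (fun k => t * ∑ i, A i k ^ 2) j

end Deterministic

section Jensen

variable {Ω : Type*} [MeasurableSpace Ω] {μ : Measure Ω} {f : Ω → ℝ}

lemma integrable_sqrt_of_nonneg [IsFiniteMeasure μ] (hf0 : 0 ≤ᵐ[μ] f) (hf : Integrable f μ) :
    Integrable (fun ω => √(f ω)) μ := by
  refine (hf.add (integrable_const 1)).mono'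
    (continuous_sqrt.measurable.comp_aemeasurable hf.aemeasurable).aestronglyMeasurable ?_
  filter_upwards [hf0] with ω hω
  rw [norm_of_nonneg (sqrt_nonneg _), Pi.add_apply]
  nlinarith [sq_sqrt hω, sqrt_nonneg (f ω)]

lemma integral_sqrt_le_sqrt_integral [IsProbabilityMeasure μ] (hf0 : 0 ≤ᵐ[μ] f)
    (hf : Integrable f μ) :
    ∫ ω, √(f ω) ∂μ ≤ √(∫ ω, f ω ∂μ) :=
  strictConcaveOn_sqrt.concaveOn.le_map_integral continuous_sqrt.continuousOn isClosed_Ici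
    hf0 hf (integrable_sqrt_of_nonneg hf0 hf)

lemma integrable_log_of_one_le (hf1 : ∀ᵐ ω ∂μ, 1 ≤ f ω) (hf : Integrable f μ) :
    Integrable (fun ω => log (f ω)) μ := by
  refine hf.mono' (measurable_log.comp_aemeasurable hf.aemeasurable).aestronglyMeasurable ?_
  filter_upwards [hf1] with ω hω
  rw [norm_of_nonneg (log_nonneg hω)]
  exact log_le_self (by linarith)

lemma integral_log_le_log_integral [IsProbabilityMeasure μ] (hf1 : ∀ᵐ ω ∂μ, 1 ≤ f ω)
    (hf : Integrable f μ) : ∫ ω, log (f ω) ∂μ ≤ log (∫ ω, f ω ∂μ) :=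
  (strictConcaveOn_log_Ioi.concaveOn.subset (Set.Ici_subset_Ioi.2 one_pos)
    (convex_Ici 1)).le_map_integral
    (continuousOn_log.mono fun _ hx => (zero_lt_one.trans_le hx).ne') isClosed_Ici hf1 hf
    (integrable_log_of_one_le hf1 hf)

lemma integral_sqrt_log_div_le [IsProbabilityMeasure μ] (hf1 : ∀ᵐ ω ∂μ, 1 ≤ f ω)
    (hf : Integrable f μ) {t : ℝ} (ht : 0 < t) :
    ∫ ω, √(log (f ω) / t) ∂μ ≤ √(log (∫ ω, f ω ∂μ) / t) := by
  have hlog0 : 0 ≤ᵐ[μ] fun ω => log (f ω) / t := by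
    filter_upwards [hf1] with ω hω using div_nonneg (log_nonneg hω) ht.le
  calc ∫ ω, √(log (f ω) / t) ∂μ ≤ √(∫ ω, log (f ω) / t ∂μ) :=
        integral_sqrt_le_sqrt_integral hlog0 ((integrable_log_of_one_le hf1 hf).div_const t)
    _ = √((∫ ω, log (f ω) ∂μ) / t) := by rw [integral_div]
    _ ≤ √(log (∫ ω, f ω ∂μ) / t) :=
        sqrt_le_sqrt (div_le_div_of_nonneg_right (integral_log_le_log_integral hf1 hf) ht.le)

end Jensen

section Gaussian

lemma gaussianPDFReal_mul_exp_mul_sq (t x : ℝ) :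
    gaussianPDFReal 0 1 x * exp (t * x ^ 2) = (√(2 * π))⁻¹ * exp (-(1 / 2 - t) * x ^ 2) := by
  rw [gaussianPDFReal, mul_assoc, ← exp_add]
  congr 2
  · simp
  · push_cast; ring

lemma integrable_exp_mul_sq_gaussianReal {t : ℝ} (ht : t < 1 / 2) :
    Integrable (fun x => exp (t * x ^ 2)) (gaussianReal 0 1) := by
  rw [gaussianReal_of_var_ne_zero 0 one_ne_zero, gaussianPDF_def,
    integrable_withDensity_iff_integrable_smul' (by fun_prop) (by simp)]
  simp only [ENNReal.toReal_ofReal (gaussianPDFReal_nonneg 0 1 _), smul_eq_mul,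
    gaussianPDFReal_mul_exp_mul_sq]
  exact (integrable_exp_neg_mul_sq (by linarith)).const_mul _

lemma integral_exp_mul_sq_gaussianReal {t : ℝ} (ht : t < 1 / 2) :
    ∫ x, exp (t * x ^ 2) ∂gaussianReal 0 1 = (√(1 - 2 * t))⁻¹ := by
  simp only [integral_gaussianReal_eq_integral_smul one_ne_zero, smul_eq_mul,
    gaussianPDFReal_mul_exp_mul_sq]
  rw [integral_const_mul, integral_gaussian, ← sqrt_inv, ← sqrt_mul (by positivity),
    ← sqrt_inv]
  congr 1
  have : 1 - 2 * t ≠ 0 := by linarith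
  field_simp

end Gaussian

section IndependentGaussians

variable {ι Ω : Type*} [Fintype ι] [MeasurableSpace Ω] {μ : Measure Ω} {Z : ι → Ω → ℝ}

lemma integrable_exp_mul_sum_sq_of_gaussian [IsFiniteMeasure μ] (hZ : iIndepFun Z μ)
    (hmeas : ∀ i, Measurable (Z i)) (hlaw : ∀ i, μ.map (Z i) = gaussianReal 0 1) {t : ℝ}
    (ht : t < 1 / 2) : Integrable (fun ω => exp (t * ∑ i, Z i ω ^ 2)) μ := by
  have hsq : iIndepFun (fun i ω => Z i ω ^ 2) μ :=
    hZ.comp (fun _ x => x ^ 2) fun _ => measurable_id.pow_const 2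
  simpa only [Finset.sum_apply] using hsq.integrable_exp_mul_sum (s := Finset.univ)
    (fun i => (hmeas i).pow_const 2) fun i _ => by
      have h := integrable_exp_mul_sq_gaussianReal ht
      rwa [← hlaw i, integrable_map_measure (by fun_prop) (hmeas i).aemeasurable] at h

lemma mgf_sum_sq_of_gaussian (hZ : iIndepFun Z μ)
    (hmeas : ∀ i, Measurable (Z i)) (hlaw : ∀ i, μ.map (Z i) = gaussianReal 0 1) {t : ℝ}
    (ht : t < 1 / 2) :
    mgf (fun ω => ∑ i, Z i ω ^ 2) μ t = (√(1 - 2 * t))⁻¹ ^ Fintype.card ι := by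
  have hsq : iIndepFun (fun i ω => Z i ω ^ 2) μ :=
    hZ.comp (fun _ x => x ^ 2) fun _ => measurable_id.pow_const 2
  have hmgf : ∀ i, mgf (fun ω => Z i ω ^ 2) μ t = (√(1 - 2 * t))⁻¹ := fun i => by
    rw [← integral_exp_mul_sq_gaussianReal ht, ← hlaw i,
      integral_map (hmeas i).aemeasurable (by fun_prop), mgf]
  have := hsq.mgf_sum (t := t) (fun i => (hmeas i).pow_const 2) Finset.univ
  simp only [Finset.sum_fn] at this
  simp [this, hmgf]

end IndependentGaussians

lemma integral_l1ToL2Norm_le {ι κ Ω : Type*} [Fintype ι] [Fintype κ] [Nonempty κ]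
    [MeasurableSpace Ω] {μ : Measure Ω} [IsProbabilityMeasure μ] {A : Ω → ι → κ → ℝ} {t : ℝ}
    (ht : 0 < t)
    (hA : ∀ j, Integrable (fun ω => exp (t * ∑ i, A ω i j ^ 2)) μ) :
    ∫ ω, l1ToL2Norm (A ω) ∂μ ≤ √(log (∑ j, ∫ ω, exp (t * ∑ i, A ω i j ^ 2) ∂μ) / t) := by
  set S : Ω → ℝ := fun ω => ∑ j, exp (t * ∑ i, A ω i j ^ 2)
  have hS1 : ∀ ω, 1 ≤ S ω := fun ω => by
    obtain ⟨j⟩ := ‹Nonempty κ›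
    calc (1 : ℝ) ≤ exp (t * ∑ i, A ω i j ^ 2) :=
          one_le_exp (mul_nonneg ht.le (Finset.sum_nonneg fun i _ => sq_nonneg _))
      _ ≤ S ω := Finset.single_le_sum (f := fun k => exp (t * ∑ i, A ω i k ^ 2))
          (fun k _ => (exp_pos _).le) (Finset.mem_univ j)
  have hS : Integrable S μ := integrable_finsetSum _ fun j _ => hA j
  calc ∫ ω, l1ToL2Norm (A ω) ∂μ ≤ ∫ ω, √(log (S ω) / t) ∂μ :=
        integral_mono_of_nonneg (ae_of_all _ fun ω => l1ToL2Norm_nonneg _)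
          (integrable_sqrt_of_nonneg
            (ae_of_all _ fun ω => div_nonneg (log_nonneg (hS1 ω)) ht.le)
            ((integrable_log_of_one_le (ae_of_all _ hS1) hS).div_const t))
          (ae_of_all _ fun ω => l1ToL2Norm_le_sqrt_log_sum_exp (A ω) ht)
    _ ≤ √(log (∫ ω, S ω ∂μ) / t) := integral_sqrt_log_div_le (ae_of_all _ hS1) hS ht
    _ = _ := by rw [integral_finsetSum _ fun j _ => hA j]

lemma sqrt_log_mul_sqrt_two_pow_div_le (m n : ℕ) (hm : 0 < m) :
    √(log (m * √2 ^ n) / 4⁻¹) ≤ 3 * (√n + √(log m)) := by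
  have hlogm : 0 ≤ log m := log_nonneg (by exact_mod_cast hm)
  have hlog : log (m * √2 ^ n) / 4⁻¹ = 4 * log m + 2 * log 2 * n := by
    rw [log_mul (by positivity) (by positivity), log_pow, log_sqrt zero_le_two]
    ring
  rw [hlog, sqrt_le_iff]
  refine ⟨by positivity, ?_⟩
  nlinarith [sq_sqrt (Nat.cast_nonneg (α := ℝ) n), sq_sqrt hlogm, log_two_lt_d9,
    mul_nonneg (sqrt_nonneg (n : ℝ)) (sqrt_nonneg (log m)), (Nat.cast_nonneg n : (0 : ℝ) ≤ n)]

theorem stmt17_general (d1 d2 : ℕ) (hd2 : 0 < d2)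
    (Ω : Type) [MeasurableSpace Ω] (μ : Measure Ω) [IsProbabilityMeasure μ]
    (G : Ω → Fin d1 → Fin d2 → ℝ)
    (hindep : iIndepFun
      (fun (p : Fin d1 × Fin d2) ω => G ω p.1 p.2) μ)
    (hdist : ∀ i j, Measure.map (fun ω => G ω i j) μ = gaussianReal 0 1) :
    (∫ ω, sSup {x | ∃ (u : Fin d1 → ℝ) (v : Fin d2 → ℝ),
        Real.sqrt (∑ i, u i ^ 2) ≤ 1 ∧ (∑ j, |v j|) ≤ 1 ∧
        x = ∑ i, ∑ j, u i * G ω i j * v j} ∂μ)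
      ≤ 3 * (Real.sqrt d1 + Real.sqrt (Real.log d2)) := by
  have : Nonempty (Fin d2) := ⟨⟨0, hd2⟩⟩
  have hae (p : Fin d1 × Fin d2) : AEMeasurable (fun ω => G ω p.1 p.2) μ :=
    .of_map_ne_zero (by rw [hdist]; exact IsProbabilityMeasure.ne_zero _)
  -- `hdist` only makes the entries a.e.-measurable; `X` is a measurable version of `G`.
  set X : Fin d1 × Fin d2 → Ω → ℝ := fun p => (hae p).mk
  have hX : iIndepFun X μ := hindep.congr fun p => (hae p).ae_eq_mk
  have hlaw (p) : μ.map (X p) = gaussianReal 0 1 := by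
    rw [← Measure.map_congr (hae p).ae_eq_mk]; exact hdist p.1 p.2
  have hcol (j : Fin d2) : iIndepFun (fun i => X (i, j)) μ :=
    hX.precomp fun i i' h => congrArg Prod.fst h
  have hGX : (fun ω => l1ToL2Norm (G ω)) =ᵐ[μ] fun ω => l1ToL2Norm fun i j => X (i, j) ω := by
    filter_upwards [ae_all_iff.2 fun p => (hae p).ae_eq_mk] with ω hω
    congr 1
    ext i j
    exact hω (i, j)
  have hmgf (j : Fin d2) : ∫ ω, exp (4⁻¹ * ∑ i, X (i, j) ω ^ 2) ∂μ = √2 ^ d1 := by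
    rw [← mgf, mgf_sum_sq_of_gaussian (hcol j) (fun _ => (hae _).measurable_mk) (fun _ => hlaw _)
      (by norm_num)]
    norm_num
  calc ∫ ω, l1ToL2Norm (G ω) ∂μ = ∫ ω, l1ToL2Norm (fun i j => X (i, j) ω) ∂μ :=
        integral_congr_ae hGX
    _ ≤ √(log (∑ j, ∫ ω, exp (4⁻¹ * ∑ i, X (i, j) ω ^ 2) ∂μ) / 4⁻¹) :=
        integral_l1ToL2Norm_le (by norm_num) fun j =>
          integrable_exp_mul_sum_sq_of_gaussian (hcol j) (fun _ => (hae _).measurable_mk)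
            (fun _ => hlaw _) (by norm_num)
    _ = √(log (d2 * √2 ^ d1) / 4⁻¹) := by simp [hmgf]
    _ ≤ 3 * (√d1 + √(log d2)) := sqrt_log_mul_sqrt_two_pow_div_le d2 d1 hd2

/-- for an i.i.d. standard Gaussian `d1 × d2` matrix `G`,
`E[sup {uᵀGv : ‖u‖₂ ≤ 1, ‖v‖₁ ≤ 1}] ≤ 3(√d1 + √(log d2))`. -/
theorem stmt17 (d1 d2 : ℕ) (hd1 : 0 < d1) (hd2 : 0 < d2)
    (Ω : Type) [MeasurableSpace Ω] (μ : Measure Ω) [IsProbabilityMeasure μ]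
    (G : Ω → Fin d1 → Fin d2 → ℝ)
    (hindep : iIndepFun
      (fun (p : Fin d1 × Fin d2) ω => G ω p.1 p.2) μ)
    (hdist : ∀ i j, Measure.map (fun ω => G ω i j) μ = gaussianReal 0 1) :
    (∫ ω, sSup {x | ∃ (u : Fin d1 → ℝ) (v : Fin d2 → ℝ),
        Real.sqrt (∑ i, u i ^ 2) ≤ 1 ∧ (∑ j, |v j|) ≤ 1 ∧
        x = ∑ i, ∑ j, u i * G ω i j * v j} ∂μ)
      ≤ 3 * (Real.sqrt d1 + Real.sqrt (Real.log d2)) :=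
  stmt17_general d1 d2 hd2 Ω μ G hindep hdist

end
end
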